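/- Let φ: ℝ → ℝ be Lipschitz and bounded below. Then for every compact set K ⊂ ℝ, sup_{x∈K} |M^λφ(x) − Mφ(x)| → 0 as λ → 0⁺, where M is the classical nonlocal operator. -/

import Mathlib

/-!
Lower bound: `D_KL ≥ 0` (Gibbs' inequality) and `∫ f dμ ≥ inf f`, so `M^λφ ≥ Mφ` for every
`λ ≥ 0`.

Upper bound: test `M^λ` with `Φ_x` conditioned on a short interval `I` around a near-minimizer
`ξ₀` of `ξ ↦ φ (x + ξ) + l ξ`. Its divergence from `Φ_x` is `-log Φ_x(I)`, and on `I` the cost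
stays within `ε` of `Mφ(x)` by the Lipschitz bounds. Coercivity of `l` keeps `ξ₀` in a ball
independent of `x ∈ K`, so the Gaussian density is bounded below on `I` uniformly in `x`, which
gives `M^λφ ≤ Mφ + ε + λ C_ε` on `K`.
-/

open MeasureTheory ProbabilityTheory Real Filter
open scoped Classical

noncomputable section

/-- The Gaussian measure `Φ_x` on `ℝ` with mean `-x` and variance `1`. -/
def Phi (x : ℝ) : Measure ℝ := gaussianReal (-x) 1

/-- Extended-real value of `∫ f dμ`: the Bochner integral when `f` is integrable,
and `+∞` otherwise (the appropriate convention for functions bounded below). -/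
def eInt (f : ℝ → ℝ) (μ : Measure ℝ) : EReal :=
  if Integrable f μ then ((∫ ξ, f ξ ∂μ : ℝ) : EReal) else ⊤

/-- Kullback–Leibler divergence `D_KL(μ‖ν) = ∫ log (dμ/dν) dμ`, equal to `+∞` if `μ` is
not absolutely continuous with respect to `ν` (or if the integral does not exist). -/
def klDiv' (μ ν : Measure ℝ) : EReal :=
  if μ ≪ ν ∧ Integrable (fun ξ => Real.log ((μ.rnDeriv ν ξ).toReal)) μ
  then ((∫ ξ, Real.log ((μ.rnDeriv ν ξ).toReal) ∂μ : ℝ) : EReal) else ⊤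

/-- The randomized nonlocal operator `M^λ`. -/
def Mlam (l : ℝ → ℝ) (lam : ℝ) (φ : ℝ → ℝ) (x : ℝ) : EReal :=
  ⨅ μ : {μ : Measure ℝ // IsProbabilityMeasure μ ∧ μ ≪ Phi x},
    eInt (fun ξ => φ (x + ξ) + l ξ) μ.1 + (lam : EReal) * klDiv' μ.1 (Phi x)

/-- The classical nonlocal operator `M`. -/
def Mcl (l : ℝ → ℝ) (φ : ℝ → ℝ) (x : ℝ) : ℝ := ⨅ ξ : ℝ, (φ (x + ξ) + l ξ)

/-- `φ` is bounded from below. -/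
def BddBelowFun (φ : ℝ → ℝ) : Prop := ∃ m : ℝ, ∀ y, m ≤ φ y

/-- `φ` is of polynomial growth. -/
def PolyGrowth (φ : ℝ → ℝ) : Prop :=
  ∃ β : ℝ, 0 ≤ β ∧ ∃ C : ℝ, ∀ y : ℝ, |φ y| ≤ C * (1 + |y| ^ β)

/-- The standing hypotheses on the intervention cost `l`. -/
structure CostHyp (l : ℝ → ℝ) (K Ll : ℝ) : Prop where
  K_pos : 0 < K
  l_zero : l 0 = K
  l_lb : ∀ x, K ≤ l x
  l_subadd : ∀ x y, l (x + y) + K ≤ l x + l y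
  l_coercive : Filter.Tendsto l (Filter.cocompact ℝ) Filter.atTop
  Ll_pos : 0 < Ll
  l_lip : ∀ x y, |l x - l y| ≤ Ll * |x - y|

instance isProbabilityMeasure_Phi (x : ℝ) : IsProbabilityMeasure (Phi x) :=
  inferInstanceAs (IsProbabilityMeasure (gaussianReal (-x) 1))

lemma lipschitzWith_of_abs_sub_le {f : ℝ → ℝ} {L : ℝ} (h : ∀ a b, |f a - f b| ≤ L * |a - b|) :
    LipschitzWith (Real.toNNReal L) f :=
  LipschitzWith.of_dist_le' fun a b => by simpa only [Real.dist_eq] using h a b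

lemma klDiv'_nonneg (μ ν : Measure ℝ) [IsProbabilityMeasure μ] [IsProbabilityMeasure ν] :
    0 ≤ klDiv' μ ν := by
  unfold klDiv'
  split_ifs with h
  · have gibbs := InformationTheory.integral_llr_add_sub_measure_univ_nonneg h.1 h.2
    simp only [probReal_univ, add_sub_cancel_right, llr_def] at gibbs
    exact_mod_cast gibbs
  · exact le_top

lemma klDiv'_cond (ν : Measure ℝ) [IsFiniteMeasure ν] {s : Set ℝ} (hs : MeasurableSet s)
    (hνs : ν s ≠ 0) : klDiv' ν[|s] ν = ((-Real.log (ν.real s) : ℝ) : EReal) := by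
  have := cond_isProbabilityMeasure (μ := ν) hνs
  have hrn : ν[|s].rnDeriv ν =ᵐ[ν] fun ξ => (ν s)⁻¹ * s.indicator 1 ξ := by
    filter_upwards [Measure.rnDeriv_smul_left_of_ne_top (ν.restrict s) ν
      (ENNReal.inv_ne_top.2 hνs), Measure.rnDeriv_restrict_self ν hs] with ξ h1 h2
    rw [ProbabilityTheory.cond, h1, Pi.smul_apply, h2, smul_eq_mul]
  have hlog : (fun ξ => Real.log ((ν[|s].rnDeriv ν ξ).toReal)) =ᵐ[ν[|s]]
      fun _ => -Real.log (ν.real s) := by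
    filter_upwards [cond_absolutelyContinuous.ae_le hrn, ae_cond_mem hs] with ξ h hξ
    rw [h, Set.indicator_of_mem hξ, Pi.one_apply, mul_one, ENNReal.toReal_inv, Real.log_inv,
      measureReal_def]
  unfold klDiv'
  rw [if_pos ⟨cond_absolutelyContinuous, (integrable_const _).congr hlog.symm⟩,
    integral_congr_ae hlog]
  simp

lemma le_eInt {f : ℝ → ℝ} {μ : Measure ℝ} [IsProbabilityMeasure μ] {c : ℝ}
    (h : ∀ ξ, c ≤ f ξ) : (c : EReal) ≤ eInt f μ := by
  unfold eInt
  split_ifs with hf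
  · exact_mod_cast (by simpa using integral_mono (integrable_const c) hf h :
      c ≤ ∫ ξ, f ξ ∂μ)
  · exact le_top

lemma eInt_le {f : ℝ → ℝ} {μ : Measure ℝ} [IsProbabilityMeasure μ] {c : ℝ}
    (hf : Integrable f μ) (h : ∀ᵐ ξ ∂μ, f ξ ≤ c) : eInt f μ ≤ c := by
  rw [eInt, if_pos hf, EReal.coe_le_coe_iff]
  simpa using integral_mono_ae hf (integrable_const c) h

lemma Mcl_le_Mlam {l φ : ℝ → ℝ} {lam x : ℝ} (hlam : 0 ≤ lam)
    (hbdd : BddBelow (Set.range fun ξ => φ (x + ξ) + l ξ)) :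
    (Mcl l φ x : EReal) ≤ Mlam l lam φ x := by
  refine le_iInf fun μ => ?_
  have := μ.2.1
  calc (Mcl l φ x : EReal) ≤ eInt (fun ξ => φ (x + ξ) + l ξ) μ.1 := le_eInt (ciInf_le hbdd)
    _ ≤ _ := le_add_of_nonneg_right (EReal.mul_nonneg (by exact_mod_cast hlam)
          (klDiv'_nonneg _ _))

lemma Mlam_le_of_forall_mem {l φ : ℝ → ℝ} {lam x c : ℝ} {s : Set ℝ} (hs : MeasurableSet s)
    (hs0 : Phi x s ≠ 0) (hint : IntegrableOn (fun ξ => φ (x + ξ) + l ξ) s (Phi x))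
    (hle : ∀ ξ ∈ s, φ (x + ξ) + l ξ ≤ c) :
    Mlam l lam φ x ≤ ((c + lam * -Real.log ((Phi x).real s) : ℝ) : EReal) := by
  have := cond_isProbabilityMeasure (μ := Phi x) hs0
  have hint' : Integrable (fun ξ => φ (x + ξ) + l ξ) (Phi x)[|s] :=
    hint.smul_measure (ENNReal.inv_ne_top.2 hs0)
  calc Mlam l lam φ x
      ≤ eInt (fun ξ => φ (x + ξ) + l ξ) (Phi x)[|s] + (lam : EReal) * klDiv' (Phi x)[|s] (Phi x) :=
        iInf_le_of_le ⟨(Phi x)[|s], this, cond_absolutelyContinuous⟩ le_rfl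
    _ ≤ (c : EReal) + (lam : EReal) * ((-Real.log ((Phi x).real s) : ℝ) : EReal) := by
        rw [klDiv'_cond _ hs hs0]
        exact add_le_add_left (eInt_le hint' ((ae_cond_mem hs).mono hle)) _
    _ = _ := by norm_cast

lemma ofReal_mul_volume_le_gaussianReal {m r : ℝ} {v : NNReal} (hv : v ≠ 0) {s : Set ℝ}
    (hsr : ∀ y ∈ s, |y - m| ≤ r) :
    ENNReal.ofReal ((√(2 * π * v))⁻¹ * exp (-r ^ 2 / (2 * v))) * volume s ≤
      gaussianReal m v s := by
  rw [gaussianReal_apply m hv, ← setLIntegral_const]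
  refine setLIntegral_mono (measurable_gaussianPDF m v) fun y hy => ENNReal.ofReal_le_ofReal ?_
  have hsq : (y - m) ^ 2 ≤ r ^ 2 := sq_le_sq' (abs_le.1 (hsr y hy)).1 (abs_le.1 (hsr y hy)).2
  rw [gaussianPDFReal]
  gcongr

lemma Phi_real_closedBall_ge {x a η r : ℝ} (hr : |a + x| + η ≤ r) :
    (√(2 * π))⁻¹ * exp (-r ^ 2 / 2) * (2 * η) ≤ (Phi x).real (Metric.closedBall a η) := by
  have hsr : ∀ y ∈ Metric.closedBall a η, |y - -x| ≤ r := fun y hy => calc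
    |y - -x| = |(y - a) + (a + x)| := by ring_nf
    _ ≤ |y - a| + |a + x| := abs_add_le _ _
    _ ≤ r := by linarith [Real.dist_eq y a ▸ Metric.mem_closedBall.1 hy]
  have h := ofReal_mul_volume_le_gaussianReal one_ne_zero hsr
  rw [Real.volume_closedBall, ← ENNReal.ofReal_mul (by positivity)] at h
  rw [Phi, measureReal_def, ← ENNReal.ofReal_le_iff_le_toReal (measure_ne_top _ _)]
  simpa only [NNReal.coe_one, mul_one] using h

lemma isBounded_setOf_lt_of_tendsto_cocompact {α : Type*} [PseudoMetricSpace α] {f : α → ℝ}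
    (hf : Tendsto f (cocompact α) atTop) (B : ℝ) : Bornology.IsBounded {y | f y < B} := by
  rw [Bornology.isBounded_def]
  simpa only [Set.compl_ofPred, not_lt] using
    Metric.cobounded_le_cocompact (hf.eventually (eventually_ge_atTop B))

lemma CostHyp.bddBelow_range {l φ : ℝ → ℝ} {K Ll : ℝ} (hl : CostHyp l K Ll)
    (hφb : BddBelowFun φ) (x : ℝ) : BddBelow (Set.range fun ξ => φ (x + ξ) + l ξ) :=
  let ⟨m, hm⟩ := hφb
  ⟨m + K, Set.forall_mem_range.2 fun ξ => add_le_add (hm (x + ξ)) (hl.l_lb ξ)⟩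

lemma CostHyp.exists_near_minimizer {l φ : ℝ → ℝ} {K Ll : ℝ} (hl : CostHyp l K Ll)
    (hφb : BddBelowFun φ) {S : Set ℝ} (hφS : BddAbove (φ '' S)) {ε : ℝ} (hε : 0 < ε) :
    ∃ R, ∀ x ∈ S, ∃ ξ₀, |ξ₀| ≤ R ∧ φ (x + ξ₀) + l ξ₀ < Mcl l φ x + ε := by
  obtain ⟨m, hm⟩ := hφb
  obtain ⟨C, hC⟩ := hφS
  obtain ⟨R, hR⟩ :=
    (isBounded_setOf_lt_of_tendsto_cocompact hl.l_coercive (C + K + ε - m)).exists_norm_le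
  refine ⟨R, fun x hx => ?_⟩
  obtain ⟨ξ₀, hξ₀⟩ := exists_lt_of_ciInf_lt (lt_add_of_pos_right (Mcl l φ x) hε)
  have hMx : Mcl l φ x ≤ φ x + K := by
    simpa [Mcl, hl.l_zero] using ciInf_le (hl.bddBelow_range ⟨m, hm⟩ x) 0
  refine ⟨ξ₀, hR ξ₀ ?_, hξ₀⟩
  rw [Set.mem_ofPred_eq]
  linarith [hm (x + ξ₀), hC (Set.mem_image_of_mem φ hx)]

theorem exists_Mlam_le_Mcl_add {l φ : ℝ → ℝ} {K Ll Lφ : ℝ} (hl : CostHyp l K Ll)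
    (hφlip : ∀ a b, |φ a - φ b| ≤ Lφ * |a - b|) (hφb : BddBelowFun φ) {S : Set ℝ}
    (hS : IsCompact S) {ε : ℝ} (hε : 0 < ε) :
    ∃ C, ∀ lam, 0 ≤ lam → ∀ x ∈ S,
      Mlam l lam φ x ≤ ((Mcl l φ x + ε + lam * C : ℝ) : EReal) := by
  have hφ := lipschitzWith_of_abs_sub_le hφlip
  set A := Lφ.toNNReal + Ll.toNNReal
  have hf (x : ℝ) : LipschitzWith A fun ξ => φ (x + ξ) + l ξ :=
    (lipschitzWith_of_abs_sub_le fun a b => by simpa using hφlip (x + a) (x + b)).add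
      (lipschitzWith_of_abs_sub_le hl.l_lip)
  obtain ⟨R, hR⟩ := hl.exists_near_minimizer hφb (hS.bddAbove_image hφ.continuous.continuousOn)
    (half_pos hε)
  obtain ⟨Rx, hRx⟩ := hS.isBounded.exists_norm_le
  set η := ε / 2 / (A + 1)
  have hη : 0 < η := by positivity
  have hAη : A * η ≤ ε / 2 := calc
    A * η ≤ (A + 1) * η := by gcongr; linarith
    _ = ε / 2 := by simp only [η]; field_simp
  set p := (√(2 * π))⁻¹ * exp (-(R + Rx + η) ^ 2 / 2) * (2 * η)
  have hp : 0 < p := by positivity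
  refine ⟨-Real.log p, fun lam hlam x hx => ?_⟩
  obtain ⟨ξ₀, hξ₀R, hξ₀⟩ := hR x hx
  set s := Metric.closedBall ξ₀ η
  have hps : p ≤ (Phi x).real s :=
    Phi_real_closedBall_ge (by linarith [abs_add_le ξ₀ x, hRx x hx, Real.norm_eq_abs x])
  have hs0 : Phi x s ≠ 0 := fun h => by
    rw [measureReal_def, h, ENNReal.toReal_zero] at hps
    linarith
  have hle : ∀ ξ ∈ s, φ (x + ξ) + l ξ ≤ Mcl l φ x + ε := fun ξ hξ => by
    have hlip := (hf x).dist_le_mul_of_le (Metric.mem_closedBall.1 hξ)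
    rw [Real.dist_eq] at hlip
    linarith [(abs_le.1 hlip).2]
  refine (Mlam_le_of_forall_mem Metric.isClosed_closedBall.measurableSet hs0
    ((hf x).continuous.continuousOn.integrableOn_compact (isCompact_closedBall ξ₀ η)) hle).trans ?_
  rw [EReal.coe_le_coe_iff]
  gcongr

/-- `sup_{x∈K} |M^λφ(x) − Mφ(x)| → 0` as `λ → 0⁺`, for every compact
`K ⊂ ℝ` (uniform convergence stated in ε-δ form, with the absolute-value bound in
`EReal` expressed by the two one-sided bounds). -/
theorem stmt_11 (l : ℝ → ℝ) (K Ll : ℝ) (hl : CostHyp l K Ll)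
    (φ : ℝ → ℝ) (hφlip : ∃ Lφ : ℝ, ∀ a b, |φ a - φ b| ≤ Lφ * |a - b|)
    (hφb : BddBelowFun φ)
    (Kset : Set ℝ) (hKc : IsCompact Kset) :
    ∀ ε : ℝ, 0 < ε → ∃ δ : ℝ, 0 < δ ∧ ∀ lam : ℝ, 0 < lam → lam < δ → ∀ x ∈ Kset,
      Mlam l lam φ x ≤ ((Mcl l φ x + ε : ℝ) : EReal) ∧
      ((Mcl l φ x - ε : ℝ) : EReal) ≤ Mlam l lam φ x := by
  intro ε hε
  obtain ⟨Lφ, hLφ⟩ := hφlip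
  obtain ⟨C, hC⟩ := exists_Mlam_le_Mcl_add hl hLφ hφb hKc (half_pos hε)
  refine ⟨ε / 2 / (|C| + 1), by positivity, fun lam hlam hlamδ x hx => ⟨?_, ?_⟩⟩
  · have hlamC : lam * C ≤ ε / 2 := calc
      lam * C ≤ lam * (|C| + 1) := by gcongr; linarith [le_abs_self C]
      _ ≤ ε / 2 / (|C| + 1) * (|C| + 1) := by gcongr
      _ = ε / 2 := by field_simp
    exact (hC lam hlam.le x hx).trans (EReal.coe_le_coe_iff.2 (by linarith))
  · exact (EReal.coe_le_coe_iff.2 (by linarith)).trans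
      (Mcl_le_Mlam hlam.le (hl.bddBelow_range hφb x))
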